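/- The set S = { σ(g(w)) : w a finite word over {+,−} } consists of exactly the 9 permutations with one-line notations 0123, 0213, 1032, 1230, 2301, 2310, 3012, 3120, 3201; moreover the set E of edge labels occurring in the Stern–Brocot tree has exactly 54 elements. -/

import Mathlib

/-- The alphabet `{r, u}` of cube rolls: `r` = right roll, `u` = up roll. -/
inductive Letter
  | r : Letter
  | u : Letter
  deriving DecidableEq

/-- The times `t ∈ (0,1)` at which the segment `t ↦ (t·a, t·b)` crosses a grid line:
`t = k/a` (crossing the vertical line `x = k`) for `1 ≤ k ≤ a−1`, and `t = i/b`
(crossing the horizontal line `y = i`) for `1 ≤ i ≤ b−1`. -/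
def crossingTimes (a b : ℕ) : Finset ℚ :=
  ((Finset.Icc 1 (a - 1)).image fun k : ℕ => (k : ℚ) / (a : ℚ)) ∪
    ((Finset.Icc 1 (b - 1)).image fun i : ℕ => (i : ℚ) / (b : ℚ))

/-- The tumble sequence `τ(a,b)`: the word over `{r, u}` obtained by recording, in
increasing order of the crossing times `t` of the segment `t ↦ (t·a, t·b)`, a letter
`r` at each crossing `t = k/a` of a vertical line and a letter `u` at each crossing
`t = i/b` of a horizontal line. -/
def tumbleWord (a b : ℕ) : List Letter :=
  ((crossingTimes a b).sort (· ≤ ·)).map fun t =>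
    if (t * (a : ℚ)).den = 1 then Letter.r else Letter.u

/-- One step of the Stern–Brocot recursion on triples `(g, g⁺, g⁻)`:
`true` (the letter `+`) sends `(g, g⁺, g⁻)` to `(g + g⁺, g⁺, g)`, and
`false` (the letter `−`) sends `(g, g⁺, g⁻)` to `(g + g⁻, g, g⁻)`. -/
def sbStep : (ℕ × ℕ) × (ℕ × ℕ) × (ℕ × ℕ) → Bool → (ℕ × ℕ) × (ℕ × ℕ) × (ℕ × ℕ)
  | (g, gp, _gm), true => (g + gp, gp, g)
  | (g, _gp, gm), false => (g + gm, g, gm)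

/-- The Stern–Brocot triple `(g(w), g⁺(w), g⁻(w))` of the node indexed by the word `w`
over `{+, −}` (`true` = `+`, `false` = `−`), starting from
`(g(ε), g⁺(ε), g⁻(ε)) = ((1,1), (0,1), (1,0))`. -/
def sb (w : List Bool) : (ℕ × ℕ) × (ℕ × ℕ) × (ℕ × ℕ) :=
  w.foldl sbStep ((1, 1), (0, 1), (1, 0))

/-- The permutation of `{0,1,2,3}` given in one-line notation by
`f 0, f 1, f 2, f 3`. -/
def ol (f : Fin 4 → Fin 4) (h : Function.Bijective f := by decide) :
    Equiv.Perm (Fin 4) :=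
  ⟨f, Fintype.bijInv h, Fintype.leftInverse_bijInv h, Fintype.rightInverse_bijInv h⟩

/-- `ρ = 1230`, the permutation `0↦1, 1↦2, 2↦3, 3↦0` (a right roll). -/
def ρ : Equiv.Perm (Fin 4) := ol ![1, 2, 3, 0]

/-- `υ = 2310`, the permutation `0↦2, 1↦3, 2↦1, 3↦0` (an up roll). -/
def υ : Equiv.Perm (Fin 4) := ol ![2, 3, 1, 0]

/-- The permutation associated to a letter: `r ↦ ρ`, `u ↦ υ`. -/
def toPerm : Letter → Equiv.Perm (Fin 4)
  | Letter.r => ρ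
  | Letter.u => υ

/-- The orientation of a word over `{r, u}`: its image under the monoid homomorphism
into `S₄` sending `r ↦ ρ` and `u ↦ υ`, composed left-to-right (the leftmost letter
acts first).  Note that in Mathlib `(f * g) x = f (g x)`, so the left-to-right
product of a word is accumulated by multiplying each new letter on the left. -/
def orient (l : List Letter) : Equiv.Perm (Fin 4) :=
  l.foldl (fun acc x => toPerm x * acc) 1

/-- `σ` on pairs of nonnegative integers: `σ((0,1)) = ρ⁻¹`, `σ((1,0)) = υ⁻¹`, and
`σ((a,b))` is the orientation of the tumble sequence `τ(a,b)` otherwise. -/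
def sigmaPt (p : ℕ × ℕ) : Equiv.Perm (Fin 4) :=
  if p = (0, 1) then ρ⁻¹
  else if p = (1, 0) then υ⁻¹
  else orient (tumbleWord p.1 p.2)

/-- The cube orientation `σ(g(w))` associated to the Stern–Brocot node indexed by the
word `w`. -/
def σnode (w : List Bool) : Equiv.Perm (Fin 4) :=
  sigmaPt (sb w).1

/-!
Write `christoffelWord p` for `r τ(p) u` (and `u`, `r` at `(0, 1)`, `(1, 0)`), the lower
Christoffel word of `p`, and `christoffelPerm p` for its orientation, so that
`σ(p) = υ⁻¹ * christoffelPerm p * ρ⁻¹`. If `det (p, q) = 1`, the triangle `0, p, p + q` contains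
no lattice point besides its vertices, so the segment towards `p + q` crosses the grid lines in
the same order as the broken line through `p`; hence
`christoffelWord (p + q) = christoffelWord p ++ christoffelWord q`.

Along the Stern–Brocot tree `g = g⁻ + g⁺` with `det (g⁻, g⁺) = 1`, so the pair `(Q, R)` of the
orientations of `g⁺` and `g⁻` starts at `(υ, ρ)`, moves by `(Q, R) ↦ (Q, Q * R)` on `+` and by
`(Q, R) ↦ (Q * R, R)` on `−`, and `σ(g) = υ⁻¹ * (Q * R) * ρ⁻¹`. The orbit of `(υ, ρ)` closes
after five steps and has 27 elements, which give the nine listed orientations. An edge label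
determines the pair at its source, since `Q * R` together with `Q * (Q * R)` (resp.
`Q * R * R`) recovers `Q` and `R`; so there are `27 * 2 = 54` labels.
-/

theorem StrictMonoOn.sortedLT_map_finsetSort {α β : Type*} [LinearOrder α] [Preorder β]
    {f : α → β} {s : Finset α} (hf : StrictMonoOn f s) : ((s.sort (· ≤ ·)).map f).SortedLT :=
  (List.pairwise_map.mpr ((s.sortedLT_sort.pairwise).imp_of_mem fun hx hy hxy =>
    hf ((Finset.mem_sort _).mp hx) ((Finset.mem_sort _).mp hy) hxy)).sortedLT

theorem List.sortedLT_append_cons_cons {α : Type*} [Preorder α] {l₁ l₂ : List α} {x y : α}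
    (h₁ : l₁.SortedLT) (h₂ : l₂.SortedLT) (hx : ∀ z ∈ l₁, z < x) (hxy : x < y)
    (hy : ∀ z ∈ l₂, y < z) : (l₁ ++ x :: y :: l₂).SortedLT := by
  rw [List.sortedLT_iff_pairwise] at *
  refine List.pairwise_append.mpr
    ⟨h₁, List.pairwise_cons.mpr ⟨fun z hz => ?_, List.pairwise_cons.mpr ⟨hy, h₂⟩⟩, ?_⟩
  · rcases List.mem_cons.mp hz with rfl | hz
    exacts [hxy, hxy.trans (hy z hz)]
  · intro z hz w hw
    rcases List.mem_cons.mp hw with rfl | hw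
    · exact hx z hz
    rcases List.mem_cons.mp hw with rfl | hw
    exacts [(hx z hz).trans hxy, ((hx z hz).trans hxy).trans (hy w hw)]

theorem mem_crossingTimes {a b : ℕ} {x : ℚ} :
    x ∈ crossingTimes a b ↔
      (∃ k : ℕ, 0 < k ∧ k < a ∧ x = k / a) ∨ (∃ i : ℕ, 0 < i ∧ i < b ∧ x = i / b) := by
  simp only [crossingTimes, Finset.mem_union, Finset.mem_image, Finset.mem_Icc]
  refine or_congr (exists_congr fun k => ?_) (exists_congr fun i => ?_) <;>
    exact ⟨fun ⟨⟨h₁, h₂⟩, h⟩ => ⟨h₁, by omega, h.symm⟩,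
      fun ⟨h₁, h₂, h⟩ => ⟨⟨h₁, by omega⟩, h.symm⟩⟩

theorem natCast_div_lt_natCast_div_iff {p q r s : ℕ} (hq : 0 < q) (hs : 0 < s) :
    (p / q : ℚ) < r / s ↔ p * s < r * q := by
  rw [div_lt_div_iff₀ (by positivity) (by positivity)]
  exact_mod_cast Iff.rfl

def crossingLetter (a : ℕ) (t : ℚ) : Letter := if (t * a).den = 1 then .r else .u

theorem tumbleWord_eq_map_sort (a b : ℕ) :
    tumbleWord a b = ((crossingTimes a b).sort (· ≤ ·)).map (crossingLetter a) := rfl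

theorem crossingLetter_div {b : ℕ} (hb : b ≠ 0) (a i : ℕ) :
    crossingLetter a (i / b) = if b ∣ i * a then .r else .u := by
  simp only [crossingLetter, div_mul_eq_mul_div, ← Nat.cast_mul,
    Rat.den_div_natCast_eq_one_iff _ _ hb]

theorem crossingLetter_div_self {a : ℕ} (ha : a ≠ 0) (k : ℕ) :
    crossingLetter a (k / a) = .r := by
  rw [crossingLetter_div ha, if_pos (dvd_mul_left a k)]

theorem crossingLetter_div_of_coprime {a b i : ℕ} (hba : b.Coprime a) (hi : 0 < i)
    (hib : i < b) : crossingLetter a (i / b) = .u := by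
  rw [crossingLetter_div (by omega), if_neg]
  exact fun h => absurd (Nat.le_of_dvd hi (hba.dvd_of_dvd_mul_right h)) (by omega)

theorem card_image_natCast_div {n : ℕ} (hn : n ≠ 0) :
    ((Finset.Icc 1 (n - 1)).image fun k : ℕ => (k / n : ℚ)).card = n - 1 := by
  rw [Finset.card_image_of_injective _ fun x y h => by simpa [hn] using h]
  simp

theorem tumbleWord_mk_one {n : ℕ} (hn : n ≠ 0) : tumbleWord n 1 = .replicate (n - 1) .r := by
  rw [tumbleWord_eq_map_sort, List.eq_replicate_iff, List.length_map, Finset.length_sort]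
  refine ⟨?_, fun ℓ hℓ => ?_⟩
  · simp [crossingTimes, card_image_natCast_div hn]
  · obtain ⟨t, ht, rfl⟩ := List.mem_map.mp hℓ
    rcases mem_crossingTimes.mp ((Finset.mem_sort _).mp ht) with ⟨k, -, -, rfl⟩ | ⟨i, _, _, -⟩
    · exact crossingLetter_div_self hn k
    · omega

theorem tumbleWord_one_mk {n : ℕ} (hn : n ≠ 0) : tumbleWord 1 n = .replicate (n - 1) .u := by
  rw [tumbleWord_eq_map_sort, List.eq_replicate_iff, List.length_map, Finset.length_sort]
  refine ⟨?_, fun ℓ hℓ => ?_⟩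
  · simp [crossingTimes, card_image_natCast_div hn]
  · obtain ⟨t, ht, rfl⟩ := List.mem_map.mp hℓ
    rcases mem_crossingTimes.mp ((Finset.mem_sort _).mp ht) with
      ⟨k, _, _, -⟩ | ⟨i, hi, hin, rfl⟩
    · omega
    · exact crossingLetter_div_of_coprime (Nat.coprime_one_right n) hi hin

section FareyNeighbours

variable {a b c d : ℕ}

theorem pos_left_of_det (hdet : a * d = b * c + 1) : 0 < a :=
  Nat.pos_of_ne_zero fun h => by simp [h] at hdet

theorem pos_right_of_det (hdet : a * d = b * c + 1) : 0 < d :=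
  Nat.pos_of_ne_zero fun h => by simp [h] at hdet

theorem coprime_left_of_det (hdet : a * d = b * c + 1) : b.Coprime a := by
  refine Nat.isCoprime_iff_coprime.mp ⟨-c, d, ?_⟩
  linear_combination (by exact_mod_cast hdet : (a * d : ℤ) = b * c + 1)

theorem coprime_right_of_det (hdet : a * d = b * c + 1) : d.Coprime c := by
  refine Nat.isCoprime_iff_coprime.mp ⟨a, -b, ?_⟩
  linear_combination (by exact_mod_cast hdet : (a * d : ℤ) = b * c + 1)

theorem coprime_add_of_det (hdet : a * d = b * c + 1) : (b + d).Coprime (a + c) :=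
  coprime_left_of_det (c := c) (d := d) (by rw [add_mul, add_mul, hdet]; ring)

theorem det_cross_lt_left {k i : ℕ} (hdet : a * d = b * c + 1) (hk : k < a)
    (h : k * b < i * a) : k * (b + d) < i * (a + c) := by
  zify at hdet h ⊢
  nlinarith [show (a : ℤ) * (i * (a + c) - k * (b + d)) = (a + c) * (i * a - k * b) - k by
    linear_combination (-(k : ℤ)) * hdet]

theorem det_cross_gt_left {k i : ℕ} (hdet : a * d = b * c + 1) (hk : k < a)
    (h : i * a < k * b) : i * (a + c) < k * (b + d) := by
  zify at hdet h ⊢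
  nlinarith [show (a : ℤ) * (k * (b + d) - i * (a + c)) = (a + c) * (k * b - i * a) + k by
    linear_combination (k : ℤ) * hdet]

theorem det_cross_lt_right {k i : ℕ} (hdet : a * d = b * c + 1) (h : k * d < i * c) :
    (a + k) * (b + d) < (b + i) * (a + c) := by
  have ha := pos_left_of_det hdet
  zify at hdet h ha ⊢
  nlinarith [show (c : ℤ) * ((b + i) * (a + c) - (a + k) * (b + d)) =
      (a + c) * (i * c - k * d) - (c - k) by linear_combination ((k : ℤ) - c) * hdet]

theorem det_cross_gt_right {k i : ℕ} (hdet : a * d = b * c + 1) (hk : k < c)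
    (h : i * c < k * d) : (b + i) * (a + c) < (a + k) * (b + d) := by
  zify at hdet h ⊢
  nlinarith [show (c : ℤ) * ((a + k) * (b + d) - (b + i) * (a + c)) =
      (a + c) * (k * d - i * c) + (c - k) by linear_combination ((c : ℤ) - k) * hdet]

/-- `leftTime` (resp. `rightTime`) sends the time at which the segment from `0` to `(a, b)`
(resp. from `(a, b)` to `(a + c, b + d)`) crosses a grid line to the time at which the segment
from `0` to `(a + c, b + d)` crosses the same line. -/
def leftTime (a b c d : ℕ) (t : ℚ) : ℚ :=
  if crossingLetter a t = .r then t * a / (a + c : ℕ) else t * b / (b + d : ℕ)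

def rightTime (a b c d : ℕ) (t : ℚ) : ℚ :=
  if crossingLetter c t = .r then (t * c + a) / (a + c : ℕ) else (t * d + b) / (b + d : ℕ)

theorem leftTime_div_left (ha : a ≠ 0) (k : ℕ) :
    leftTime a b c d (k / a) = k / (a + c : ℕ) := by
  rw [leftTime, if_pos (crossingLetter_div_self ha k), div_mul_cancel₀ _ (by exact_mod_cast ha)]

theorem leftTime_div_right {i : ℕ} (hba : b.Coprime a) (hi : 0 < i) (hib : i < b) :
    leftTime a b c d (i / b) = i / (b + d : ℕ) := by
  rw [leftTime, crossingLetter_div_of_coprime hba hi hib, if_neg nofun,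
    div_mul_cancel₀ _ (by exact_mod_cast (show b ≠ 0 by omega))]

theorem rightTime_div_left (hc : c ≠ 0) (k : ℕ) :
    rightTime a b c d (k / c) = (a + k : ℕ) / (a + c : ℕ) := by
  rw [rightTime, if_pos (crossingLetter_div_self hc k), div_mul_cancel₀ _ (by exact_mod_cast hc)]
  push_cast; ring

theorem rightTime_div_right {i : ℕ} (hdc : d.Coprime c) (hi : 0 < i) (hid : i < d) :
    rightTime a b c d (i / d) = (b + i : ℕ) / (b + d : ℕ) := by
  rw [rightTime, crossingLetter_div_of_coprime hdc hi hid, if_neg nofun,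
    div_mul_cancel₀ _ (by exact_mod_cast (show d ≠ 0 by omega))]
  push_cast; ring

theorem strictMonoOn_leftTime (hdet : a * d = b * c + 1) :
    StrictMonoOn (leftTime a b c d) (crossingTimes a b) := by
  have ha := pos_left_of_det hdet
  have hba := coprime_left_of_det hdet
  have hac : (0 : ℚ) < (a + c : ℕ) := by exact_mod_cast (show 0 < a + c by omega)
  intro x hx y hy hxy
  rcases mem_crossingTimes.mp hx with ⟨k, hk, hka, rfl⟩ | ⟨i, hi, hib, rfl⟩ <;>
    rcases mem_crossingTimes.mp hy with ⟨k', hk', hka', rfl⟩ | ⟨i', hi', hib', rfl⟩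
  · rw [leftTime_div_left ha.ne', leftTime_div_left ha.ne', div_lt_div_iff_of_pos_right hac]
    rwa [div_lt_div_iff_of_pos_right (by exact_mod_cast ha)] at hxy
  · rw [leftTime_div_left ha.ne', leftTime_div_right hba hi' hib',
      natCast_div_lt_natCast_div_iff (by omega) (by omega)]
    rw [natCast_div_lt_natCast_div_iff ha (by omega)] at hxy
    exact det_cross_lt_left hdet hka hxy
  · rw [leftTime_div_right hba hi hib, leftTime_div_left ha.ne',
      natCast_div_lt_natCast_div_iff (by omega) (by omega)]
    rw [natCast_div_lt_natCast_div_iff (by omega) ha] at hxy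
    exact det_cross_gt_left hdet hka' hxy
  · rw [leftTime_div_right hba hi hib, leftTime_div_right hba hi' hib',
      div_lt_div_iff_of_pos_right (by exact_mod_cast (show 0 < b + d by omega))]
    rwa [div_lt_div_iff_of_pos_right (by exact_mod_cast (show 0 < b by omega))] at hxy

theorem strictMonoOn_rightTime (hdet : a * d = b * c + 1) :
    StrictMonoOn (rightTime a b c d) (crossingTimes c d) := by
  have hd := pos_right_of_det hdet
  have hdc := coprime_right_of_det hdet
  have hbd : (0 : ℚ) < (b + d : ℕ) := by exact_mod_cast (show 0 < b + d by omega)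
  intro x hx y hy hxy
  rcases mem_crossingTimes.mp hx with ⟨k, hk, hkc, rfl⟩ | ⟨i, hi, hid, rfl⟩ <;>
    rcases mem_crossingTimes.mp hy with ⟨k', hk', hkc', rfl⟩ | ⟨i', hi', hid', rfl⟩
  · rw [rightTime_div_left (by omega), rightTime_div_left (by omega),
      div_lt_div_iff_of_pos_right (by exact_mod_cast (show 0 < a + c by omega))]
    rw [div_lt_div_iff_of_pos_right (by exact_mod_cast (show 0 < c by omega))] at hxy
    push_cast; linarith
  · rw [rightTime_div_left (by omega), rightTime_div_right hdc hi' hid',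
      natCast_div_lt_natCast_div_iff (by omega) (by omega)]
    rw [natCast_div_lt_natCast_div_iff (by omega) hd] at hxy
    exact det_cross_lt_right hdet hxy
  · rw [rightTime_div_right hdc hi hid, rightTime_div_left (by omega),
      natCast_div_lt_natCast_div_iff (by omega) (by omega)]
    rw [natCast_div_lt_natCast_div_iff hd (by omega)] at hxy
    exact det_cross_gt_right hdet hkc' hxy
  · rw [rightTime_div_right hdc hi hid, rightTime_div_right hdc hi' hid',
      div_lt_div_iff_of_pos_right hbd]
    rw [div_lt_div_iff_of_pos_right (by exact_mod_cast hd)] at hxy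
    push_cast; linarith

theorem leftTime_lt (hdet : a * d = b * c + 1) (hb : 0 < b) {t : ℚ}
    (ht : t ∈ crossingTimes a b) : leftTime a b c d t < (b / (b + d : ℕ) : ℚ) := by
  have ha := pos_left_of_det hdet
  rcases mem_crossingTimes.mp ht with ⟨k, hk, hka, rfl⟩ | ⟨i, hi, hib, rfl⟩
  · rw [leftTime_div_left ha.ne', natCast_div_lt_natCast_div_iff (by omega) (by omega)]
    exact det_cross_lt_left hdet hka
      (by rw [Nat.mul_comm b a]; exact Nat.mul_lt_mul_of_pos_right hka hb)
  · rw [leftTime_div_right (coprime_left_of_det hdet) hi hib,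
      div_lt_div_iff_of_pos_right (by exact_mod_cast (show 0 < b + d by omega))]
    exact_mod_cast hib

theorem div_lt_div_of_det (hdet : a * d = b * c + 1) :
    (b / (b + d : ℕ) : ℚ) < a / (a + c : ℕ) := by
  have ha := pos_left_of_det hdet
  have hd := pos_right_of_det hdet
  rw [natCast_div_lt_natCast_div_iff (by omega) (by omega)]
  nlinarith

theorem lt_rightTime (hdet : a * d = b * c + 1) (hc : 0 < c) {t : ℚ}
    (ht : t ∈ crossingTimes c d) : (a / (a + c : ℕ) : ℚ) < rightTime a b c d t := by
  have ha := pos_left_of_det hdet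
  have hd := pos_right_of_det hdet
  rcases mem_crossingTimes.mp ht with ⟨k, hk, hkc, rfl⟩ | ⟨i, hi, hid, rfl⟩
  · rw [rightTime_div_left (by omega), div_lt_div_iff_of_pos_right
      (by exact_mod_cast (show 0 < a + c by omega))]
    exact_mod_cast (show a < a + k by omega)
  · rw [rightTime_div_right (coprime_right_of_det hdet) hi hid,
      natCast_div_lt_natCast_div_iff (by omega) (by omega)]
    simpa using det_cross_lt_right (k := 0) hdet (by simpa using Nat.mul_pos hi hc)

theorem leftTime_mem_crossingTimes_add (hdet : a * d = b * c + 1) {t : ℚ}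
    (ht : t ∈ crossingTimes a b) : leftTime a b c d t ∈ crossingTimes (a + c) (b + d) := by
  have ha := pos_left_of_det hdet
  rcases mem_crossingTimes.mp ht with ⟨k, hk, hka, rfl⟩ | ⟨i, hi, hib, rfl⟩
  · rw [leftTime_div_left ha.ne']
    exact mem_crossingTimes.mpr (.inl ⟨k, hk, by omega, rfl⟩)
  · rw [leftTime_div_right (coprime_left_of_det hdet) hi hib]
    exact mem_crossingTimes.mpr (.inr ⟨i, hi, by omega, rfl⟩)

theorem rightTime_mem_crossingTimes_add (hdet : a * d = b * c + 1) {t : ℚ}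
    (ht : t ∈ crossingTimes c d) : rightTime a b c d t ∈ crossingTimes (a + c) (b + d) := by
  rcases mem_crossingTimes.mp ht with ⟨k, hk, hkc, rfl⟩ | ⟨i, hi, hid, rfl⟩
  · rw [rightTime_div_left (by omega)]
    exact mem_crossingTimes.mpr (.inl ⟨a + k, by omega, by omega, rfl⟩)
  · rw [rightTime_div_right (coprime_right_of_det hdet) hi hid]
    exact mem_crossingTimes.mpr (.inr ⟨b + i, by omega, by omega, rfl⟩)

theorem mem_crossingTimes_add (hdet : a * d = b * c + 1) (hb : 0 < b) (hc : 0 < c) {x : ℚ} :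
    x ∈ crossingTimes (a + c) (b + d) ↔
      (∃ t ∈ crossingTimes a b, leftTime a b c d t = x) ∨ x = b / (b + d : ℕ) ∨
        x = a / (a + c : ℕ) ∨ ∃ t ∈ crossingTimes c d, rightTime a b c d t = x := by
  have ha := pos_left_of_det hdet
  have hd := pos_right_of_det hdet
  refine ⟨fun hx => ?_, ?_⟩
  · rcases mem_crossingTimes.mp hx with ⟨k, hk, hkac, rfl⟩ | ⟨i, hi, hibd, rfl⟩
    · rcases lt_trichotomy k a with hka | rfl | hak
      · exact .inl ⟨_, mem_crossingTimes.mpr (.inl ⟨k, hk, hka, rfl⟩), leftTime_div_left ha.ne' k⟩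
      · exact .inr (.inr (.inl rfl))
      · refine .inr (.inr (.inr ⟨_, mem_crossingTimes.mpr (.inl ⟨k - a, by omega, by omega, rfl⟩),
          ?_⟩))
        rw [rightTime_div_left hc.ne', Nat.add_sub_cancel' hak.le]
    · rcases lt_trichotomy i b with hib | rfl | hbi
      · exact .inl ⟨_, mem_crossingTimes.mpr (.inr ⟨i, hi, hib, rfl⟩),
          leftTime_div_right (coprime_left_of_det hdet) hi hib⟩
      · exact .inr (.inl rfl)
      · refine .inr (.inr (.inr ⟨_, mem_crossingTimes.mpr (.inr ⟨i - b, by omega, by omega, rfl⟩),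
          ?_⟩))
        rw [rightTime_div_right (coprime_right_of_det hdet) (by omega) (by omega),
          Nat.add_sub_cancel' hbi.le]
  · rintro (⟨t, ht, rfl⟩ | rfl | rfl | ⟨t, ht, rfl⟩)
    · exact leftTime_mem_crossingTimes_add hdet ht
    · exact mem_crossingTimes.mpr (.inr ⟨b, hb, by omega, rfl⟩)
    · exact mem_crossingTimes.mpr (.inl ⟨a, ha, by omega, rfl⟩)
    · exact rightTime_mem_crossingTimes_add hdet ht

theorem crossingLetter_leftTime (hdet : a * d = b * c + 1) {t : ℚ}
    (ht : t ∈ crossingTimes a b) :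
    crossingLetter (a + c) (leftTime a b c d t) = crossingLetter a t := by
  have ha := pos_left_of_det hdet
  have hba := coprime_left_of_det hdet
  rcases mem_crossingTimes.mp ht with ⟨k, hk, hka, rfl⟩ | ⟨i, hi, hib, rfl⟩
  · rw [leftTime_div_left ha.ne', crossingLetter_div_self (by omega),
      crossingLetter_div_self ha.ne']
  · rw [leftTime_div_right hba hi hib, crossingLetter_div_of_coprime (coprime_add_of_det hdet) hi
      (by omega), crossingLetter_div_of_coprime hba hi hib]

theorem crossingLetter_rightTime (hdet : a * d = b * c + 1) {t : ℚ}
    (ht : t ∈ crossingTimes c d) :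
    crossingLetter (a + c) (rightTime a b c d t) = crossingLetter c t := by
  have hdc := coprime_right_of_det hdet
  rcases mem_crossingTimes.mp ht with ⟨k, hk, hkc, rfl⟩ | ⟨i, hi, hid, rfl⟩
  · rw [rightTime_div_left (by omega), crossingLetter_div_self (by omega),
      crossingLetter_div_self (by omega)]
  · rw [rightTime_div_right hdc hi hid, crossingLetter_div_of_coprime (coprime_add_of_det hdet)
      (by omega) (by omega), crossingLetter_div_of_coprime hdc hi hid]

theorem tumbleWord_add (hdet : a * d = b * c + 1) (hb : 0 < b) (hc : 0 < c) :
    tumbleWord (a + c) (b + d) = tumbleWord a b ++ .u :: .r :: tumbleWord c d := by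
  have hsort : (crossingTimes (a + c) (b + d)).sort (· ≤ ·) =
      ((crossingTimes a b).sort (· ≤ ·)).map (leftTime a b c d) ++ (b / (b + d : ℕ) : ℚ) ::
        (a / (a + c : ℕ) : ℚ) :: ((crossingTimes c d).sort (· ≤ ·)).map (rightTime a b c d) := by
    refine (Finset.sortedLT_sort _).eq_of_mem_iff ?_ fun x => ?_
    · refine List.sortedLT_append_cons_cons (strictMonoOn_leftTime hdet).sortedLT_map_finsetSort
        (strictMonoOn_rightTime hdet).sortedLT_map_finsetSort ?_ (div_lt_div_of_det hdet) ?_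
      · simpa using fun t ht => leftTime_lt hdet hb ht
      · simpa using fun t ht => lt_rightTime hdet hc ht
    · simp [mem_crossingTimes_add hdet hb hc]
  rw [tumbleWord_eq_map_sort, hsort, tumbleWord_eq_map_sort, tumbleWord_eq_map_sort]
  have hd := pos_right_of_det hdet
  simp only [List.map_append, List.map_cons, List.map_map,
    crossingLetter_div_of_coprime (coprime_add_of_det hdet) hb (by omega : b < b + d),
    crossingLetter_div_self (by omega : a + c ≠ 0)]
  congr 1
  · exact List.map_congr_left fun t ht => crossingLetter_leftTime hdet ((Finset.mem_sort _).mp ht)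
  · exact congrArg _ (congrArg _ (List.map_congr_left fun t ht =>
      crossingLetter_rightTime hdet ((Finset.mem_sort _).mp ht)))

end FareyNeighbours

def christoffelWord (p : ℕ × ℕ) : List Letter :=
  if p = (0, 1) then [.u] else if p = (1, 0) then [.r] else .r :: (tumbleWord p.1 p.2 ++ [.u])

theorem christoffelWord_of_ne_zero {a b : ℕ} (ha : a ≠ 0) (hb : b ≠ 0) :
    christoffelWord (a, b) = .r :: (tumbleWord a b ++ [.u]) := by
  simp [christoffelWord, ha, hb]

theorem christoffelWord_mk_one (n : ℕ) :
    christoffelWord (n, 1) = .replicate n .r ++ [.u] := by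
  rcases Nat.eq_zero_or_pos n with rfl | hn
  · rfl
  · rw [christoffelWord_of_ne_zero hn.ne' one_ne_zero, tumbleWord_mk_one hn.ne',
      ← List.cons_append, ← List.replicate_succ, Nat.sub_add_cancel hn]

theorem christoffelWord_one_mk (n : ℕ) :
    christoffelWord (1, n) = .r :: .replicate n .u := by
  rcases Nat.eq_zero_or_pos n with rfl | hn
  · rfl
  · rw [christoffelWord_of_ne_zero one_ne_zero hn.ne', tumbleWord_one_mk hn.ne',
      ← List.replicate_succ', Nat.sub_add_cancel hn]

def IsFareyPair (p q : ℕ × ℕ) : Prop := p.1 * q.2 = p.2 * q.1 + 1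

theorem christoffelWord_add {p q : ℕ × ℕ} (h : IsFareyPair p q) :
    christoffelWord (p + q) = christoffelWord p ++ christoffelWord q := by
  obtain ⟨a, b⟩ := p
  obtain ⟨c, d⟩ := q
  change a * d = b * c + 1 at h
  rw [Prod.mk_add_mk]
  rcases Nat.eq_zero_or_pos b with rfl | hb
  · obtain ⟨rfl, rfl⟩ : a = 1 ∧ d = 1 := mul_eq_one.mp (by simpa using h)
    rw [christoffelWord_mk_one, christoffelWord_one_mk, christoffelWord_mk_one]
    simp [add_comm 1 c, List.replicate_succ]
  rcases Nat.eq_zero_or_pos c with rfl | hc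
  · obtain ⟨rfl, rfl⟩ : a = 1 ∧ d = 1 := mul_eq_one.mp (by simpa using h)
    rw [christoffelWord_one_mk, christoffelWord_one_mk, christoffelWord_mk_one,
      List.replicate_succ']
    simp
  have ha := pos_left_of_det h
  have hd := pos_right_of_det h
  rw [christoffelWord_of_ne_zero (by omega) (by omega),
    christoffelWord_of_ne_zero (by omega) (by omega),
    christoffelWord_of_ne_zero (by omega) (by omega), tumbleWord_add h hb hc]
  simp

theorem foldl_toPerm_mul (l : List Letter) (s : Equiv.Perm (Fin 4)) :
    l.foldl (fun acc x => toPerm x * acc) s = orient l * s := by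
  induction l generalizing s with
  | nil => simp [orient]
  | cons x l ih => rw [orient, List.foldl_cons, List.foldl_cons, ih, ih, mul_one, mul_assoc]

theorem orient_append (l₁ l₂ : List Letter) : orient (l₁ ++ l₂) = orient l₂ * orient l₁ := by
  rw [orient, List.foldl_append, ← orient, foldl_toPerm_mul]

theorem orient_singleton (x : Letter) : orient [x] = toPerm x := by
  simp [orient]

def christoffelPerm (p : ℕ × ℕ) : Equiv.Perm (Fin 4) := orient (christoffelWord p)

theorem christoffelPerm_add {p q : ℕ × ℕ} (h : IsFareyPair p q) :
    christoffelPerm (p + q) = christoffelPerm q * christoffelPerm p := by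
  rw [christoffelPerm, christoffelWord_add h, orient_append, christoffelPerm, christoffelPerm]

theorem sigmaPt_eq_christoffelPerm (p : ℕ × ℕ) : sigmaPt p = υ⁻¹ * christoffelPerm p * ρ⁻¹ := by
  unfold sigmaPt christoffelPerm christoffelWord
  split_ifs
  · simp [orient_singleton, toPerm]
  · simp [orient_singleton, toPerm]
  · rw [← List.singleton_append, orient_append, orient_append, orient_singleton, orient_singleton]
    simp [toPerm, mul_assoc]

theorem sb_append (w : List Bool) (ε : Bool) : sb (w ++ [ε]) = sbStep (sb w) ε := by
  rw [sb, sb, List.foldl_append, List.foldl_cons, List.foldl_nil]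

theorem isFareyPair_sbStep {g p m : ℕ × ℕ} (h : IsFareyPair m p) (hg : g = m + p) (ε : Bool) :
    IsFareyPair (sbStep (g, p, m) ε).2.2 (sbStep (g, p, m) ε).2.1 ∧
      (sbStep (g, p, m) ε).1 = (sbStep (g, p, m) ε).2.2 + (sbStep (g, p, m) ε).2.1 := by
  subst hg
  unfold IsFareyPair at *
  cases ε
  · exact ⟨by simp only [sbStep, Prod.fst_add, Prod.snd_add]; linarith, add_comm _ _⟩
  · exact ⟨by simp only [sbStep, Prod.fst_add, Prod.snd_add]; linarith, rfl⟩

theorem isFareyPair_sb (w : List Bool) :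
    IsFareyPair (sb w).2.2 (sb w).2.1 ∧ (sb w).1 = (sb w).2.2 + (sb w).2.1 := by
  induction w using List.reverseRecOn with
  | nil => exact ⟨rfl, rfl⟩
  | append_singleton w ε ih =>
    rw [sb_append]
    rcases hw : sb w with ⟨g, p, m⟩
    rw [hw] at ih
    exact isFareyPair_sbStep ih.1 ih.2 ε

abbrev PermPair := Equiv.Perm (Fin 4) × Equiv.Perm (Fin 4)

def pairStep : PermPair → Bool → PermPair
  | (Q, R), true => (Q, Q * R)
  | (Q, R), false => (Q * R, R)

def rollPair (w : List Bool) : PermPair := w.foldl pairStep (υ, ρ)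

def nodePerm (s : PermPair) : Equiv.Perm (Fin 4) := υ⁻¹ * (s.1 * s.2) * ρ⁻¹

theorem rollPair_append (w : List Bool) (ε : Bool) :
    rollPair (w ++ [ε]) = pairStep (rollPair w) ε := by
  rw [rollPair, rollPair, List.foldl_append, List.foldl_cons, List.foldl_nil]

theorem rollPair_eq (w : List Bool) :
    rollPair w = (christoffelPerm (sb w).2.1, christoffelPerm (sb w).2.2) := by
  induction w using List.reverseRecOn with
  | nil => simp [rollPair, sb, christoffelPerm, christoffelWord, orient_singleton, toPerm]
  | append_singleton w ε ih =>
    obtain ⟨hF, hg⟩ := isFareyPair_sb w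
    rw [rollPair_append, ih, sb_append]
    rcases hw : sb w with ⟨g, p, m⟩
    rw [hw] at hF hg
    dsimp only at hF hg
    subst hg
    cases ε <;> simp [pairStep, sbStep, christoffelPerm_add hF]

theorem σnode_eq_nodePerm (w : List Bool) : σnode w = nodePerm (rollPair w) := by
  obtain ⟨hF, hg⟩ := isFareyPair_sb w
  rw [σnode, sigmaPt_eq_christoffelPerm, hg, christoffelPerm_add hF, rollPair_eq, nodePerm,
    mul_assoc υ⁻¹]

def reachableWithin : ℕ → Finset PermPair
  | 0 => {(υ, ρ)}
  | n + 1 => reachableWithin n ∪ (reachableWithin n ×ˢ Finset.univ).image fun x => pairStep x.1 x.2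

theorem exists_rollPair_eq_of_mem_reachableWithin {n : ℕ} {s : PermPair}
    (hs : s ∈ reachableWithin n) : ∃ w, rollPair w = s := by
  induction n generalizing s with
  | zero => exact ⟨[], (Finset.mem_singleton.mp hs).symm⟩
  | succ n ih =>
    rcases Finset.mem_union.mp hs with hs | hs
    · exact ih hs
    · obtain ⟨⟨t, ε⟩, ht, rfl⟩ := Finset.mem_image.mp hs
      obtain ⟨w, rfl⟩ := ih (Finset.mem_product.mp ht).1
      exact ⟨w ++ [ε], rollPair_append w ε⟩

set_option maxRecDepth 8000 in
theorem pairStep_mem_reachableWithin_five :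
    ∀ s ∈ reachableWithin 5, ∀ ε, pairStep s ε ∈ reachableWithin 5 := by
  decide

set_option maxRecDepth 8000 in
theorem rollPair_mem_reachableWithin_five (w : List Bool) : rollPair w ∈ reachableWithin 5 := by
  induction w using List.reverseRecOn with
  | nil => decide
  | append_singleton w ε ih => rw [rollPair_append]; exact pairStep_mem_reachableWithin_five _ ih ε

theorem range_rollPair : Set.range rollPair = reachableWithin 5 :=
  Set.Subset.antisymm (Set.range_subset_iff.mpr rollPair_mem_reachableWithin_five)
    fun _ hs => exists_rollPair_eq_of_mem_reachableWithin hs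

set_option maxRecDepth 8000 in
theorem card_reachableWithin_five : (reachableWithin 5).card = 27 := by
  decide

set_option maxRecDepth 8000 in
theorem image_nodePerm_reachableWithin_five :
    (reachableWithin 5).image nodePerm =
      {ol ![0, 1, 2, 3], ol ![0, 2, 1, 3], ol ![1, 0, 3, 2], ol ![1, 2, 3, 0], ol ![2, 3, 0, 1],
        ol ![2, 3, 1, 0], ol ![3, 0, 1, 2], ol ![3, 1, 2, 0], ol ![3, 2, 0, 1]} := by
  decide

def edgeLabel (x : PermPair × Bool) : Equiv.Perm (Fin 4) × Equiv.Perm (Fin 4) × Bool :=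
  (nodePerm x.1, nodePerm (pairStep x.1 x.2), x.2)

theorem edgeLabel_rollPair (w : List Bool) (ε : Bool) :
    edgeLabel (rollPair w, ε) = (σnode w, σnode (w ++ [ε]), ε) := by
  rw [edgeLabel, σnode_eq_nodePerm, σnode_eq_nodePerm, rollPair_append]

theorem edgeLabel_injective : Function.Injective edgeLabel := by
  rintro ⟨⟨Q, R⟩, ε⟩ ⟨⟨Q', R'⟩, ε'⟩ h
  simp only [edgeLabel, nodePerm, Prod.mk.injEq, mul_left_inj, mul_right_inj] at h
  obtain ⟨hP, hstep, rfl⟩ := h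
  cases ε <;> simp only [pairStep] at hstep
  · rw [hP, mul_right_inj] at hstep
    subst hstep
    rw [mul_left_inj] at hP
    rw [hP]
  · rw [hP, mul_left_inj] at hstep
    subst hstep
    rw [mul_right_inj] at hP
    rw [hP]

/-- The set `S` of cube orientations occurring at nodes of the Stern–Brocot tree
consists of exactly the 9 permutations with one-line notations
`0123, 0213, 1032, 1230, 2301, 2310, 3012, 3120, 3201`; moreover, the set `E` of
edge labels `(σ(s), σ(t), ε)` occurring in the tree has exactly 54 elements. -/
theorem orientations_and_edge_labels_count :
    {p : Equiv.Perm (Fin 4) | ∃ w : List Bool, σnode w = p} =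
      {ol ![0, 1, 2, 3], ol ![0, 2, 1, 3], ol ![1, 0, 3, 2], ol ![1, 2, 3, 0],
        ol ![2, 3, 0, 1], ol ![2, 3, 1, 0], ol ![3, 0, 1, 2], ol ![3, 1, 2, 0],
        ol ![3, 2, 0, 1]} ∧
      {e : Equiv.Perm (Fin 4) × Equiv.Perm (Fin 4) × Bool |
        ∃ (w : List Bool) (ε : Bool),
          e = (σnode w, σnode (w ++ [ε]), ε)}.ncard = 54 := by
  have hS : {p | ∃ w : List Bool, σnode w = p} = nodePerm '' Set.range rollPair := by
    ext p
    simp only [Set.mem_ofPred_eq, Set.mem_image, Set.exists_range_iff, σnode_eq_nodePerm]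
  have hE : {e : Equiv.Perm (Fin 4) × Equiv.Perm (Fin 4) × Bool |
      ∃ (w : List Bool) (ε : Bool), e = (σnode w, σnode (w ++ [ε]), ε)} =
        edgeLabel '' (Set.range rollPair ×ˢ Set.univ) := by
    ext e
    constructor
    · rintro ⟨w, ε, rfl⟩
      exact ⟨(rollPair w, ε), ⟨⟨w, rfl⟩, trivial⟩, edgeLabel_rollPair w ε⟩
    · rintro ⟨⟨_, ε⟩, ⟨⟨w, rfl⟩, -⟩, rfl⟩
      exact ⟨w, ε, edgeLabel_rollPair w ε⟩
  constructor
  · rw [hS, range_rollPair, ← Finset.coe_image, image_nodePerm_reachableWithin_five]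
    simp
  · rw [hE, edgeLabel_injective.injOn.ncard_image, range_rollPair, ← Finset.coe_univ,
      ← Finset.coe_product, Set.ncard_coe_finset, Finset.card_product, card_reachableWithin_five]
    rfl
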